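/- arXiv:2003.03665 — 3 statements merged into one kernel-verified Lean document; each statement's English description precedes it below -/
import Mathlib

section
/- Let 0 < α < 1 and M ≥ 0. If f is holomorphic on the unit disk, continuous on the closed disk, and satisfies |f(e^{it}) − f(e^{is})| ≤ M|e^{it} − e^{is}|^α for all real t, s, then for every z with |z| ≤ 1/2 one has (1−|z|)^α |f'(z)| ≤ M · 2^{2−α} π^{α+1} / (α+1). -/
/-!
Subtracting `f 1`, the Hölder condition bounds `f - f 1` by `M * 2 ^ α` on the unit circle, hence
on the closed disk by the maximum modulus principle. Cauchy's estimate on the disk of radius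
`1 - ‖z‖` about `z` then gives `‖f' z‖ ≤ M * 2 ^ α / (1 - ‖z‖)`, and for `‖z‖ ≤ 1 / 2` this makes
`(1 - ‖z‖) ^ α * ‖f' z‖ ≤ 2 * M`, which is below the stated constant.
-/

open Complex Metric Real

section CauchyEstimate

variable {E : Type*} [NormedAddCommGroup E] [NormedSpace ℂ E]

theorem Complex.norm_le_of_forall_mem_sphere_norm_le {f : ℂ → E} {c : ℂ} {R C : ℝ} (hR : R ≠ 0)
    (hf : DiffContOnCl ℂ f (ball c R)) (hC : ∀ u ∈ sphere c R, ‖f u‖ ≤ C) {w : ℂ}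
    (hw : w ∈ closedBall c R) : ‖f w‖ ≤ C :=
  Complex.norm_le_of_forall_mem_frontier_norm_le isBounded_ball hf
    (by rwa [frontier_ball c hR]) (by rwa [closure_ball c hR])

theorem Complex.norm_deriv_le_of_forall_mem_sphere_norm_le_of_mem_ball {f : ℂ → E} {c z : ℂ}
    {R C : ℝ} (hf : DiffContOnCl ℂ f (ball c R)) (hC : ∀ u ∈ sphere c R, ‖f u‖ ≤ C)
    (hz : z ∈ ball c R) : ‖deriv f z‖ ≤ C / (R - dist z c) := by
  have hR : R ≠ 0 := (pos_of_mem_ball hz).ne'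
  have hr : 0 < R - dist z c := sub_pos.2 (mem_ball.1 hz)
  have hsub : closedBall z (R - dist z c) ⊆ closedBall c R :=
    closedBall_subset_closedBall' (by linarith)
  refine Complex.norm_deriv_le_of_forall_mem_sphere_norm_le hr ⟨?_, ?_⟩ fun u hu =>
    Complex.norm_le_of_forall_mem_sphere_norm_le hR hf hC (hsub (sphere_subset_closedBall hu))
  · exact hf.differentiableOn.mono (ball_subset_ball' (by linarith))
  · rw [closure_ball z hr.ne']
    exact hf.continuousOn.mono (hsub.trans (closure_ball c hR).symm.subset)

end CauchyEstimate

theorem norm_sub_le_of_holder_on_circle {α M : ℝ} (hα : 0 ≤ α) (hM : 0 ≤ M) {f : ℂ → ℂ}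
    (hb : ∀ t s : ℝ,
      ‖f (exp (t * I)) - f (exp (s * I))‖ ≤ M * ‖exp (t * I) - exp (s * I)‖ ^ α)
    {u : ℂ} (hu : ‖u‖ = 1) : ‖f u - f 1‖ ≤ M * 2 ^ α := by
  have hu_exp : exp (arg u * I) = u := by
    simpa [hu] using norm_mul_exp_arg_mul_I u
  have hdist : ‖u - 1‖ ≤ 2 := (norm_sub_le u 1).trans (by simp [hu]; norm_num)
  calc ‖f u - f 1‖ ≤ M * ‖u - 1‖ ^ α := by simpa [hu_exp] using hb (arg u) 0
    _ ≤ M * 2 ^ α := by gcongr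

theorem rpow_mul_two_rpow_div_le_two {α r : ℝ} (hα : α ≤ 1) (hr : 1 / 2 ≤ r) :
    r ^ α * 2 ^ α / r ≤ 2 := by
  have hr0 : 0 < r := by linarith
  rw [← mul_rpow hr0.le zero_le_two, div_le_iff₀ hr0]
  linarith [rpow_le_self_of_one_le (by linarith : 1 ≤ r * 2) hα]

theorem two_le_two_rpow_mul_pi_rpow_div {α : ℝ} (hα : 0 ≤ α) (hα1 : α ≤ 1) :
    2 ≤ 2 ^ (2 - α) * π ^ (α + 1) / (α + 1) := by
  have h2 : (2 : ℝ) ≤ 2 ^ (2 - α) := by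
    simpa using rpow_le_rpow_of_exponent_le one_le_two (by linarith : (1 : ℝ) ≤ 2 - α)
  have hπ : (2 : ℝ) ≤ π ^ (α + 1) := by
    have := rpow_le_rpow_of_exponent_le (by linarith [pi_gt_three] : 1 ≤ π)
      (by linarith : (1 : ℝ) ≤ α + 1)
    rw [rpow_one] at this
    linarith [pi_gt_three]
  rw [le_div_iff₀ (by linarith)]
  nlinarith

theorem stmt_2 (α M : ℝ) (hα : 0 < α) (hα1 : α < 1) (hM : 0 ≤ M)
    (f : ℂ → ℂ)
    (hd : DifferentiableOn ℂ f (ball (0 : ℂ) 1))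
    (hc : ContinuousOn f (closedBall (0 : ℂ) 1))
    (hb : ∀ t s : ℝ,
      ‖f (Complex.exp (t * Complex.I)) - f (Complex.exp (s * Complex.I))‖ ≤
        M * ‖Complex.exp (t * Complex.I) - Complex.exp (s * Complex.I)‖ ^ α) :
    ∀ z : ℂ, ‖z‖ ≤ 1 / 2 →
      (1 - ‖z‖) ^ α * ‖deriv f z‖ ≤ M * 2 ^ (2 - α) * π ^ (α + 1) / (α + 1) := by
  intro z hz
  have hg : DiffContOnCl ℂ (fun w => f w - f 1) (ball 0 1) :=
    ⟨hd.sub_const _, by rw [closure_ball _ one_ne_zero]; exact hc.sub continuousOn_const⟩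
  have hderiv : ‖deriv f z‖ ≤ M * 2 ^ α / (1 - ‖z‖) := by
    simpa using Complex.norm_deriv_le_of_forall_mem_sphere_norm_le_of_mem_ball hg
      (fun u hu => norm_sub_le_of_holder_on_circle hα.le hM hb (mem_sphere_zero_iff_norm.1 hu))
      (mem_ball_zero_iff.2 (by linarith))
  calc (1 - ‖z‖) ^ α * ‖deriv f z‖ ≤ (1 - ‖z‖) ^ α * (M * 2 ^ α / (1 - ‖z‖)) :=
      mul_le_mul_of_nonneg_left hderiv (rpow_nonneg (by linarith [norm_nonneg z]) α)
    _ = M * ((1 - ‖z‖) ^ α * 2 ^ α / (1 - ‖z‖)) := by ring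
    _ ≤ M * 2 := by gcongr; exact rpow_mul_two_rpow_div_le_two hα1.le (by linarith)
    _ ≤ M * (2 ^ (2 - α) * π ^ (α + 1) / (α + 1)) := by
      gcongr; exact two_le_two_rpow_mul_pi_rpow_div hα.le hα1.le
    _ = M * 2 ^ (2 - α) * π ^ (α + 1) / (α + 1) := by ring
end

section
/- Let f = g + conj(h) : 𝔻 → Ω be a harmonic k-quasiconformal diffeomorphism (g, h holomorphic, |h'| ≤ k|g'|, 0 ≤ k < 1) and let 0 < p. Then ∫_Ω |∂_w f^{-1}(w)|^p dλ(w) ≤ (1+k²)/(1−k²)^p · ∫_𝔻 |g'(z)|^{2−p} dλ(z), where λ is Lebesgue measure in the plane. -/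
/-!
Since `f` has real derivative `v ↦ g'(z) v + conj (h'(z)) conj v` at `z`, its Jacobian is
`|g'|² - |h'|²` and the inverse has `∂_w f⁻¹ (f z) = conj (g'(z)) / (|g'|² - |h'|²)`.
Changing variables `w = f z` turns the left-hand integral into
`∫_𝔻 |g'|^(2-p) (1 - |h'/g'|²)^(1-p)`, and the last factor, a power of a number in
`[1 - k², 1]`, is at most `(1 - k²)^(-p) ≤ (1 + k²) / (1 - k²)^p`. It is also bounded below by
a positive constant, so the left-hand integral diverges (and is `0` in Lean) whenever the
right-hand one does.
-/

open Complex Metric MeasureTheory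

/-- The Wirtinger derivative ∂/∂w of a map `F : ℂ → ℂ`, viewed as a map of `ℝ²`. -/
noncomputable def wirtingerDeriv (F : ℂ → ℂ) (w : ℂ) : ℂ :=
  (fderiv ℝ F w 1 - Complex.I * fderiv ℝ F w Complex.I) / 2

open ComplexConjugate Set Filter Topology

noncomputable def wirtingerCLM (a b : ℂ) : ℂ →L[ℝ] ℂ :=
  a • ContinuousLinearMap.id ℝ ℂ + b • conjCLE.toContinuousLinearMap

@[simp]
theorem wirtingerCLM_apply (a b v : ℂ) : wirtingerCLM a b v = a * v + b * conj v := by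
  simp [wirtingerCLM]

theorem wirtingerCLM_det (a b : ℂ) : (wirtingerCLM a b).det = ‖a‖ ^ 2 - ‖b‖ ^ 2 := by
  rw [ContinuousLinearMap.det, ← LinearMap.det_toMatrix basisOneI, Matrix.det_fin_two]
  simp [LinearMap.toMatrix_apply, Complex.sq_norm, normSq_apply]
  ring

theorem wirtingerCLM_comp_inv {a b : ℂ} (hab : ‖a‖ ^ 2 - ‖b‖ ^ 2 ≠ 0) :
    (wirtingerCLM a b).comp
      (wirtingerCLM (conj a / (‖a‖ ^ 2 - ‖b‖ ^ 2 : ℝ)) (-b / (‖a‖ ^ 2 - ‖b‖ ^ 2 : ℝ))) =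
      ContinuousLinearMap.id ℝ ℂ := by
  have hD : ((‖a‖ ^ 2 - ‖b‖ ^ 2 : ℝ) : ℂ) ≠ 0 := mod_cast hab
  ext1 v
  simp only [ContinuousLinearMap.comp_apply, wirtingerCLM_apply, ContinuousLinearMap.id_apply,
    map_add, map_mul, map_div₀, map_neg, conj_conj, conj_ofReal]
  field_simp
  push_cast
  rw [← mul_conj', ← mul_conj']
  ring

theorem wirtingerDeriv_of_fderiv_eq {F : ℂ → ℂ} {w a b : ℂ}
    (hF : fderiv ℝ F w = wirtingerCLM a b) : wirtingerDeriv F w = a := by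
  rw [wirtingerDeriv, hF, wirtingerCLM_apply, wirtingerCLM_apply, conj_I, map_one]
  linear_combination (b - a) / 2 * I_sq

theorem hasFDerivAt_add_conj {g h : ℂ → ℂ} {z : ℂ} (hg : DifferentiableAt ℂ g z)
    (hh : DifferentiableAt ℂ h z) :
    HasFDerivAt (fun w => g w + conj (h w)) (wirtingerCLM (deriv g z) (conj (deriv h z))) z := by
  refine ((hg.hasDerivAt.hasFDerivAt.restrictScalars ℝ).add
    (conjCLE.toContinuousLinearMap.hasFDerivAt.comp z
      (hh.hasDerivAt.hasFDerivAt.restrictScalars ℝ))).congr_fderiv ?_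
  ext1 v
  simp [mul_comm]

theorem HasFDerivAt.fderiv_of_local_left_inverse {𝕜 E F : Type*} [NontriviallyNormedField 𝕜]
    [NormedAddCommGroup E] [NormedSpace 𝕜 E] [NormedAddCommGroup F] [NormedSpace 𝕜 F]
    {f : E → F} {finv : F → E} {f' : E →L[𝕜] F} {finv' : F →L[𝕜] E} {z : E}
    (hf : HasFDerivAt f f' z) (hinv : finv ∘ f =ᶠ[𝓝 z] id)
    (hd : DifferentiableAt 𝕜 finv (f z)) (hfinv' : f'.comp finv' = .id 𝕜 F) :
    fderiv 𝕜 finv (f z) = finv' := by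
  have hleft : (fderiv 𝕜 finv (f z)).comp f' = .id 𝕜 E :=
    (hd.hasFDerivAt.comp z hf).unique ((hasFDerivAt_id z).congr_of_eventuallyEq hinv)
  calc fderiv 𝕜 finv (f z) = ((fderiv 𝕜 finv (f z)).comp f').comp finv' := by
        rw [ContinuousLinearMap.comp_assoc, hfinv', ContinuousLinearMap.comp_id]
    _ = finv' := by rw [hleft, ContinuousLinearMap.id_comp]

theorem wirtingerDeriv_of_local_left_inverse {f finv : ℂ → ℂ} {a b z : ℂ}
    (hf : HasFDerivAt f (wirtingerCLM a b) z) (hinv : finv ∘ f =ᶠ[𝓝 z] id)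
    (hd : DifferentiableAt ℝ finv (f z)) (hab : ‖a‖ ^ 2 - ‖b‖ ^ 2 ≠ 0) :
    wirtingerDeriv finv (f z) = conj a / (‖a‖ ^ 2 - ‖b‖ ^ 2 : ℝ) :=
  wirtingerDeriv_of_fderiv_eq (hf.fderiv_of_local_left_inverse hinv hd (wirtingerCLM_comp_inv hab))

theorem min_le_rpow_of_mem_Icc {a u : ℝ} (q : ℝ) (ha : 0 < a) (hu : u ∈ Icc a 1) :
    min (a ^ q) 1 ≤ u ^ q := by
  rcases le_or_gt 0 q with hq | hq
  · exact (min_le_left _ _).trans (Real.rpow_le_rpow ha.le hu.1 hq)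
  · exact (min_le_right _ _).trans
      (Real.one_le_rpow_of_pos_of_le_one_of_nonpos (ha.trans_le hu.1) hu.2 hq.le)

theorem rpow_one_sub_le_of_mem_Icc {a u p : ℝ} (hp : 0 ≤ p) (ha : 0 < a) (hu : u ∈ Icc a 1) :
    u ^ (1 - p) ≤ (a ^ p)⁻¹ := by
  have hu0 : 0 < u := ha.trans_le hu.1
  rw [Real.rpow_sub hu0, Real.rpow_one, ← one_div]
  exact div_le_div₀ zero_le_one hu.2 (by positivity) (Real.rpow_le_rpow ha.le hu.1 hp)

theorem one_sub_sq_rpow_mem_Icc {k t p : ℝ} (hp : 0 ≤ p) (ht : 0 ≤ t) (htk : t ≤ k)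
    (hk : k < 1) :
    (1 - t ^ 2) ^ (1 - p) ∈
      Icc (min ((1 - k ^ 2) ^ (1 - p)) 1) ((1 + k ^ 2) / (1 - k ^ 2) ^ p) := by
  have hk2 : 0 < 1 - k ^ 2 := by nlinarith
  have hu : 1 - t ^ 2 ∈ Icc (1 - k ^ 2) 1 := by constructor <;> nlinarith
  refine ⟨min_le_rpow_of_mem_Icc _ hk2 hu, (rpow_one_sub_le_of_mem_Icc hp hk2 hu).trans ?_⟩
  rw [← one_div]
  gcongr
  nlinarith

theorem sq_mul_mul_div_rpow {A u : ℝ} (hA : 0 < A) (hu : 0 < u) (p : ℝ) :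
    A ^ 2 * u * (A / (A ^ 2 * u)) ^ p = A ^ (2 - p) * u ^ (1 - p) := by
  have : A / (A ^ 2 * u) = (A * u)⁻¹ := by field_simp
  rw [this, Real.inv_rpow (by positivity), Real.mul_rpow hA.le hu.le, Real.rpow_sub hA,
    Real.rpow_sub hu, Real.rpow_one, Real.rpow_two]
  field_simp

theorem abs_det_wirtingerCLM_mul_rpow {a b : ℂ} (hab : ‖b‖ < ‖a‖) (p : ℝ) :
    |(wirtingerCLM a b).det| * ‖conj a / ((‖a‖ ^ 2 - ‖b‖ ^ 2 : ℝ) : ℂ)‖ ^ p =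
      ‖a‖ ^ (2 - p) * (1 - (‖b‖ / ‖a‖) ^ 2) ^ (1 - p) := by
  have ha : 0 < ‖a‖ := (norm_nonneg b).trans_lt hab
  have hD : ‖a‖ ^ 2 - ‖b‖ ^ 2 = ‖a‖ ^ 2 * (1 - (‖b‖ / ‖a‖) ^ 2) := by field_simp
  have hu : 0 < 1 - (‖b‖ / ‖a‖) ^ 2 := by
    rw [sub_pos, div_pow, div_lt_one (by positivity)]
    exact pow_lt_pow_left₀ hab (norm_nonneg b) two_ne_zero
  rw [wirtingerCLM_det, norm_div, RCLike.norm_conj, norm_real, Real.norm_eq_abs, hD,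
    abs_of_pos (by positivity), sq_mul_mul_div_rpow ha hu]

theorem integral_mul_le_of_mem_Icc {α : Type*} [MeasurableSpace α] {μ : Measure α}
    {ψ m : α → ℝ} {c C : ℝ} (hc : 0 < c) (hψ : AEStronglyMeasurable ψ μ) (hψ0 : 0 ≤ᵐ[μ] ψ)
    (hm : ∀ᵐ x ∂μ, m x ∈ Icc c C) :
    ∫ x, ψ x * m x ∂μ ≤ C * ∫ x, ψ x ∂μ := by
  by_cases hint : Integrable ψ μ
  · rw [← integral_const_mul]
    refine integral_mono_of_nonneg ?_ (hint.const_mul C) ?_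
    · filter_upwards [hψ0, hm] with x hx hmx
      exact mul_nonneg hx (hc.le.trans hmx.1)
    · filter_upwards [hψ0, hm] with x hx hmx
      rw [mul_comm]
      exact mul_le_mul_of_nonneg_right hmx.2 hx
  · -- `c ψ ≤ ψ m`, so `ψ m` is not integrable either and both integrals vanish.
    have hint' : ¬ Integrable (fun x => ψ x * m x) μ := fun h => hint <| by
      refine (h.const_mul c⁻¹).mono' hψ ?_
      filter_upwards [hψ0, hm] with x hx hmx
      rw [Real.norm_eq_abs, abs_of_nonneg hx, le_inv_mul_iff₀ hc, mul_comm]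
      exact mul_le_mul_of_nonneg_left hmx.1 hx
    rw [integral_undef hint, integral_undef hint', mul_zero]

theorem stmt_7_general (k p : ℝ) (hk0 : 0 ≤ k) (hk1 : k < 1) (hp : 0 < p)
    (g h f : ℂ → ℂ) (Ω : Set ℂ)
    (hg : DifferentiableOn ℂ g (ball (0 : ℂ) 1))
    (hh : DifferentiableOn ℂ h (ball (0 : ℂ) 1))
    (hf : ∀ z ∈ ball (0 : ℂ) 1, f z = g z + (starRingEnd ℂ) (h z))
    (hqc : ∀ z ∈ ball (0 : ℂ) 1, ‖deriv h z‖ ≤ k * ‖deriv g z‖)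
    (hJ : ∀ z ∈ ball (0 : ℂ) 1, ‖deriv h z‖ < ‖deriv g z‖)
    (hbij : Set.BijOn f (ball (0 : ℂ) 1) Ω)
    (Finv : ℂ → ℂ)
    (hlinv : ∀ z ∈ ball (0 : ℂ) 1, Finv (f z) = z)
    (hFd : ∀ w ∈ Ω, DifferentiableAt ℝ Finv w) :
    (∫ w in Ω, ‖wirtingerDeriv Finv w‖ ^ p ∂volume) ≤
      (1 + k ^ 2) / (1 - k ^ 2) ^ p *
        ∫ z in ball (0 : ℂ) 1, ‖deriv g z‖ ^ (2 - p) ∂volume := by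
  have hk2 : 0 < 1 - k ^ 2 := by nlinarith
  have hfd (z) (hz : z ∈ ball (0 : ℂ) 1) :
      HasFDerivAt f (wirtingerCLM (deriv g z) (conj (deriv h z))) z :=
    (hasFDerivAt_add_conj (hg.differentiableAt (isOpen_ball.mem_nhds hz))
      (hh.differentiableAt (isOpen_ball.mem_nhds hz))).congr_of_eventuallyEq
      (eventually_of_mem (isOpen_ball.mem_nhds hz) hf)
  have hdensity : EqOn
      (fun z => |(wirtingerCLM (deriv g z) (conj (deriv h z))).det| •
        ‖wirtingerDeriv Finv (f z)‖ ^ p)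
      (fun z => ‖deriv g z‖ ^ (2 - p) * (1 - (‖deriv h z‖ / ‖deriv g z‖) ^ 2) ^ (1 - p))
      (ball 0 1) := fun z hz => by
    have hab : ‖conj (deriv h z)‖ < ‖deriv g z‖ := by rw [RCLike.norm_conj]; exact hJ z hz
    simp only [smul_eq_mul]
    rw [wirtingerDeriv_of_local_left_inverse (hfd z hz)
      (eventually_of_mem (isOpen_ball.mem_nhds hz) hlinv) (hFd _ (hbij.mapsTo hz))
      (by nlinarith [norm_nonneg (conj (deriv h z))]), abs_det_wirtingerCLM_mul_rpow hab,
      RCLike.norm_conj]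
  rw [← hbij.image_eq, integral_image_eq_integral_abs_det_fderiv_smul volume measurableSet_ball
    (fun z hz => (hfd z hz).hasFDerivWithinAt) hbij.injOn,
    setIntegral_congr_fun measurableSet_ball hdensity]
  refine integral_mul_le_of_mem_Icc (c := min ((1 - k ^ 2) ^ (1 - p)) 1)
    (lt_min (Real.rpow_pos_of_pos hk2 _) one_pos)
    ((measurable_deriv g).norm.pow_const _).aestronglyMeasurable
    (ae_of_all _ fun z => by positivity) (ae_restrict_of_forall_mem measurableSet_ball
      fun z hz => one_sub_sq_rpow_mem_Icc hp.le (by positivity)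
        (div_le_of_le_mul₀ (norm_nonneg _) hk0 (hqc z hz)) hk1)

theorem stmt_7 (k p : ℝ) (hk0 : 0 ≤ k) (hk1 : k < 1) (hp : 0 < p)
    (g h f : ℂ → ℂ) (Ω : Set ℂ)
    (hg : DifferentiableOn ℂ g (ball (0 : ℂ) 1))
    (hh : DifferentiableOn ℂ h (ball (0 : ℂ) 1))
    (hf : ∀ z ∈ ball (0 : ℂ) 1, f z = g z + (starRingEnd ℂ) (h z))
    (hqc : ∀ z ∈ ball (0 : ℂ) 1, ‖deriv h z‖ ≤ k * ‖deriv g z‖)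
    (hJ : ∀ z ∈ ball (0 : ℂ) 1, ‖deriv h z‖ < ‖deriv g z‖)
    (hbij : Set.BijOn f (ball (0 : ℂ) 1) Ω)
    (Finv : ℂ → ℂ)
    (hlinv : ∀ z ∈ ball (0 : ℂ) 1, Finv (f z) = z)
    (hrinv : ∀ w ∈ Ω, f (Finv w) = w)
    (hFd : ∀ w ∈ Ω, DifferentiableAt ℝ Finv w) :
    (∫ w in Ω, ‖wirtingerDeriv Finv w‖ ^ p ∂volume) ≤
      (1 + k ^ 2) / (1 - k ^ 2) ^ p *
        ∫ z in ball (0 : ℂ) 1, ‖deriv g z‖ ^ (2 - p) ∂volume :=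
  stmt_7_general k p hk0 hk1 hp g h f Ω hg hh hf hqc hJ hbij Finv hlinv hFd
end

section
/- The function f₀(z) = 2z + (1−z)·log(1−z) is holomorphic and injective on the unit disk, extends continuously to the closed disk, but |f₀'(z)| = |1 − log(1−z)| is unbounded on 𝔻; in particular f₀ is not Lipschitz continuous on 𝔻. -/
/-!
The derivative is `f₀' z = 1 - log (1 - z)`. Its real part `1 - log ‖1 - z‖` exceeds
`1 - log 2 > 0` on the disk, so `f₀` is injective there (Noshiro–Warschawski). On the radius,
`‖f₀' r‖ = 1 - log (1 - r) → ∞` as `r → 1⁻`, so `f₀` cannot be Lipschitz; yet the formula is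
continuous up to the boundary because `w log w → 0` as `w → 0`.
-/

open Complex ComplexConjugate Metric

theorem Complex.one_sub_mem_slitPlane {z : ℂ} (hz : ‖z‖ ≤ 1) (hz₁ : z ≠ 1) :
    1 - z ∈ slitPlane := by
  rw [mem_slitPlane_iff]
  by_contra! h
  have hre : z.re = 1 := by
    linarith [h.1, (abs_le.1 ((abs_re_le_norm z).trans hz)).2, sub_re 1 z, one_re]
  exact hz₁ (Complex.ext hre (by simpa using h.2))

theorem Complex.continuousAt_mul_log_zero : ContinuousAt (fun w : ℂ => w * log w) 0 := by
  have hbound : ∀ w : ℂ, ‖w * log w‖ ≤ |‖w‖ * Real.log ‖w‖| + Real.pi * ‖w‖ := fun w => by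
    calc ‖w * log w‖ ≤ ‖w‖ * (|(log w).re| + |(log w).im|) := by
          rw [norm_mul]; gcongr; exact norm_le_abs_re_add_abs_im _
      _ ≤ ‖w‖ * (|Real.log ‖w‖| + Real.pi) := by
          rw [log_re, log_im]; gcongr; exact abs_arg_le_pi w
      _ = |‖w‖ * Real.log ‖w‖| + Real.pi * ‖w‖ := by
          rw [abs_mul, abs_norm]; ring
  have hcont : Continuous fun w : ℂ => |‖w‖ * Real.log ‖w‖| + Real.pi * ‖w‖ := by
    fun_prop
  rw [ContinuousAt, zero_mul]
  exact squeeze_zero_norm hbound (by simpa using hcont.tendsto 0)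

theorem hasDerivAt_two_mul_add_one_sub_mul_log {z : ℂ} (hz : 1 - z ∈ slitPlane) :
    HasDerivAt (fun z : ℂ => 2 * z + (1 - z) * log (1 - z)) (1 - log (1 - z)) z := by
  have hsub : HasDerivAt (fun w : ℂ => 1 - w) (-1) z := by
    simpa using (hasDerivAt_id z).const_sub 1
  refine (((hasDerivAt_id z).const_mul 2).add (hsub.mul (hsub.clog hz))).congr_deriv ?_
  rw [mul_div_cancel₀ _ (slitPlane_ne_zero hz)]
  ring

theorem continuousOn_two_mul_add_one_sub_mul_log :
    ContinuousOn (fun z : ℂ => 2 * z + (1 - z) * log (1 - z)) (closedBall 0 1) := by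
  intro z hz
  have hmulLog : ContinuousAt (fun w : ℂ => w * log w) (1 - z) := by
    by_cases hz₁ : z = 1
    · rw [hz₁, sub_self]
      exact continuousAt_mul_log_zero
    · exact continuousAt_id.mul
        (continuousAt_clog (one_sub_mem_slitPlane (mem_closedBall_zero_iff.1 hz) hz₁))
  exact ((continuousAt_id.const_mul 2).add
    (hmulLog.comp (continuousAt_const.sub continuousAt_id))).continuousWithinAt

theorem Complex.re_one_sub_log_one_sub_pos {z : ℂ} (hz : ‖z‖ < 1) :
    0 < (1 - log (1 - z)).re := by
  have hne : 1 - z ≠ 0 := slitPlane_ne_zero (one_sub_mem_slitPlane hz.le (by rintro rfl; simp at hz))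
  have hlt : ‖1 - z‖ < 2 := by
    linarith [norm_sub_le (1 : ℂ) z, norm_one (α := ℂ)]
  rw [sub_re, one_re, log_re]
  linarith [Real.log_lt_log (norm_pos_iff.2 hne) hlt, Real.log_two_lt_d9]

theorem Convex.injOn_of_hasDerivAt_of_re_pos {f f' : ℂ → ℂ} {s : Set ℂ} (hs : Convex ℝ s)
    (hf : ∀ z ∈ s, HasDerivAt f (f' z) z) (hf' : ∀ z ∈ s, 0 < (f' z).re) : Set.InjOn f s := by
  -- `t ↦ Re (conj d * f (w + t d))` has derivative `‖d‖² Re f' > 0` but takes equal values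
  -- at `0` and `1`.
  intro w hw z hz hfwz
  by_contra hne
  set d := z - w
  have hd : d ≠ 0 := sub_ne_zero.2 (Ne.symm hne)
  have hseg : ∀ t ∈ Set.Icc (0 : ℝ) 1, w + t * d ∈ s := fun t ht => by
    simpa [Complex.real_smul] using hs.add_smul_sub_mem hw hz ht
  have hg : ∀ t ∈ Set.Icc (0 : ℝ) 1, HasDerivAt (fun t : ℝ => (conj d * f (w + t * d)).re)
      (conj d * (f' (w + t * d) * d)).re t := fun t ht => by
    have hline : HasDerivAt (fun u : ℂ => w + u * d) d t := by
      simpa using ((hasDerivAt_id (t : ℂ)).mul_const d).const_add w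
    exact (((hf _ (hseg t ht)).comp (t : ℂ) hline).const_mul (conj d)).real_of_complex
  obtain ⟨c, hc, hslope⟩ := exists_hasDerivAt_eq_slope _ _ zero_lt_one
    (fun t ht => (hg t ht).continuousAt.continuousWithinAt)
    (fun t ht => hg t (Set.Ioo_subset_Icc_self ht))
  have hpos : 0 < (conj d * (f' (w + c * d) * d)).re := by
    rw [show conj d * (f' (w + c * d) * d) = normSq d * f' (w + c * d) by
      rw [normSq_eq_conj_mul_self]; ring, re_ofReal_mul]
    exact mul_pos (normSq_pos.2 hd) (hf' _ (hseg c (Set.Ioo_subset_Icc_self hc)))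
  have hends : (conj d * f (w + (1 : ℝ) * d)).re = (conj d * f (w + (0 : ℝ) * d)).re := by
    simp [d, hfwz]
  rw [hends, sub_self, zero_div] at hslope
  exact hpos.ne' hslope

theorem bddAbove_norm_deriv_of_lipschitz {𝕜 F : Type*} [NontriviallyNormedField 𝕜]
    [NormedAddCommGroup F] [NormedSpace 𝕜 F] {f : 𝕜 → F} {s : Set 𝕜} {C : ℝ}
    (hs : IsOpen s) (hf : DifferentiableOn 𝕜 f s)
    (hC : ∀ z ∈ s, ∀ w ∈ s, ‖f z - f w‖ ≤ C * ‖z - w‖) :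
    BddAbove ((fun z => ‖deriv f z‖) '' s) := by
  refine ⟨max C 0, ?_⟩
  rintro _ ⟨z, hz, rfl⟩
  refine ((hf z hz).differentiableAt (hs.mem_nhds hz)).hasDerivAt.le_of_lip' (le_max_right C 0) ?_
  filter_upwards [hs.mem_nhds hz] with w hw
  exact (hC w hw z hz).trans (by gcongr; exact le_max_left C 0)

theorem Complex.not_bddAbove_norm_one_sub_log_one_sub :
    ¬BddAbove ((fun z : ℂ => ‖1 - log (1 - z)‖) '' ball 0 1) := by
  rintro ⟨M, hM⟩
  set x := Real.exp (-|M|)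
  have hx₀ : 0 < x := Real.exp_pos _
  have hx₁ : x ≤ 1 := Real.exp_le_one_iff.2 (neg_nonpos.2 (abs_nonneg M))
  have hmem : ((1 - x : ℝ) : ℂ) ∈ ball (0 : ℂ) 1 := by
    rw [mem_ball_zero_iff, norm_real, Real.norm_eq_abs, abs_lt]
    constructor <;> linarith
  have hval : ‖1 - log (1 - ((1 - x : ℝ) : ℂ))‖ = 1 + |M| := by
    rw [show 1 - ((1 - x : ℝ) : ℂ) = (x : ℂ) by push_cast; ring, ← ofReal_log hx₀.le,
      Real.log_exp, ← ofReal_one, ← ofReal_sub, norm_real, Real.norm_eq_abs, sub_neg_eq_add,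
      abs_of_nonneg (by positivity)]
  linarith [hM ⟨_, hmem, hval⟩, le_abs_self M]

theorem stmt_14 (f₀ : ℂ → ℂ)
    (hf₀ : ∀ z : ℂ, f₀ z = 2 * z + (1 - z) * Complex.log (1 - z)) :
    DifferentiableOn ℂ f₀ (ball (0 : ℂ) 1) ∧
    Set.InjOn f₀ (ball (0 : ℂ) 1) ∧
    (∃ F : ℂ → ℂ, ContinuousOn F (closedBall (0 : ℂ) 1) ∧
      Set.EqOn F f₀ (ball (0 : ℂ) 1)) ∧
    (∀ z ∈ ball (0 : ℂ) 1, deriv f₀ z = 1 - Complex.log (1 - z)) ∧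
    ¬ BddAbove ((fun z => ‖deriv f₀ z‖) '' ball (0 : ℂ) 1) ∧
    ¬ ∃ C : ℝ, ∀ z ∈ ball (0 : ℂ) 1, ∀ w ∈ ball (0 : ℂ) 1,
        ‖f₀ z - f₀ w‖ ≤ C * ‖z - w‖ := by
  obtain rfl : f₀ = fun z => 2 * z + (1 - z) * log (1 - z) := funext hf₀
  have hderiv : ∀ z ∈ ball (0 : ℂ) 1,
      HasDerivAt (fun z : ℂ => 2 * z + (1 - z) * log (1 - z)) (1 - log (1 - z)) z :=
    fun z hz => hasDerivAt_two_mul_add_one_sub_mul_log <| one_sub_mem_slitPlane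
      (mem_ball_zero_iff.1 hz).le (by rintro rfl; simp at hz)
  have hdiff : DifferentiableOn ℂ (fun z : ℂ => 2 * z + (1 - z) * log (1 - z)) (ball 0 1) :=
    fun z hz => (hderiv z hz).differentiableAt.differentiableWithinAt
  have hunbdd : ¬BddAbove ((fun z => ‖deriv (fun z : ℂ => 2 * z + (1 - z) * log (1 - z)) z‖) ''
      ball (0 : ℂ) 1) := by
    rw [Set.image_congr fun z hz => by rw [(hderiv z hz).deriv]]
    exact not_bddAbove_norm_one_sub_log_one_sub
  refine ⟨hdiff, ?_, ⟨_, continuousOn_two_mul_add_one_sub_mul_log, Set.eqOn_refl _ _⟩,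
    fun z hz => (hderiv z hz).deriv, hunbdd,
    fun ⟨C, hC⟩ => hunbdd (bddAbove_norm_deriv_of_lipschitz isOpen_ball hdiff hC)⟩
  exact (convex_ball 0 1).injOn_of_hasDerivAt_of_re_pos hderiv
    fun z hz => re_one_sub_log_one_sub_pos (mem_ball_zero_iff.1 hz)
end
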